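/- A function f ∈ H²_ω is H²_ω-inner if and only if ‖f‖ = 1 and |p(0)| ≤ ‖p·f‖ for every polynomial p. -/

import Mathlib

/-!
If `f` is inner, then `⟨p f, f⟩ = p(0) ‖f‖² = p(0)`, so `|p(0)| ≤ ‖p f‖` by Cauchy–Schwarz.
Conversely, testing the inequality on `p = 1 + c z^m` gives, for every `c ∈ ℂ`,
`‖f‖² ≤ ‖f + c z^m f‖² = ‖f‖² + |c|² ‖z^m f‖² + 2 Re (c ⟨z^m f, f⟩)`, and a real quadratic form
in `c` that is nonnegative has no linear part, so `⟨z^m f, f⟩ = 0`.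
-/

noncomputable section
open Complex Filter

namespace WHS

/-- Membership in the weighted Hardy space: the coefficient sequence `a` satisfies
`∑ ω n * |a n|^2 < ∞`. -/
def memH (ω : ℕ → ℝ) (a : ℕ → ℂ) : Prop :=
  Summable fun n => ω n * ‖a n‖ ^ 2

/-- The squared norm `‖f‖²` in the weighted Hardy space. -/
def wNorm2 (ω : ℕ → ℝ) (a : ℕ → ℂ) : ℝ := ∑' n, ω n * ‖a n‖ ^ 2

/-- The inner product `⟨f, g⟩ = ∑ ω n * a n * conj (b n)` (linear in the first argument). -/
def wInner (ω : ℕ → ℝ) (a b : ℕ → ℂ) : ℂ :=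
  ∑' n, (ω n : ℂ) * a n * (starRingEnd ℂ) (b n)

/-- Coefficients of `z^m * f`. -/
def shift (m : ℕ) (a : ℕ → ℂ) : ℕ → ℂ := fun n => if m ≤ n then a (n - m) else 0

/-- Coefficients of `p * f` for a polynomial `p`. -/
def polyMul (p : Polynomial ℂ) (a : ℕ → ℂ) : ℕ → ℂ :=
  fun n => ∑ j ∈ Finset.range (n + 1), p.coeff j * a (n - j)

/-- Coefficients of the product of power series with coefficients `b` and `a`. -/
def conv (b a : ℕ → ℂ) : ℕ → ℂ :=
  fun n => ∑ j ∈ Finset.range (n + 1), b j * a (n - j)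

/-- `f` is an `H²_ω`-inner function: `f ∈ H²_ω`, `‖f‖ = 1` and `⟨z^m f, f⟩ = 0` for all `m ≥ 1`. -/
def IsInner (ω : ℕ → ℝ) (a : ℕ → ℂ) : Prop :=
  memH ω a ∧ wNorm2 ω a = 1 ∧ ∀ m : ℕ, 1 ≤ m → wInner ω (shift m a) a = 0

end WHS

open Polynomial Finset ComplexConjugate

lemma eq_zero_of_forall_nonneg_norm_sq_mul_add_re {N : ℝ} {z : ℂ}
    (h : ∀ c : ℂ, 0 ≤ ‖c‖ ^ 2 * N + 2 * (c * z).re) : z = 0 := by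
  set t : ℝ := (|N| + 1)⁻¹
  have ht : 0 < t := by positivity
  have htN : t * N < 1 := by
    have : t * (|N| + 1) = 1 := inv_mul_cancel₀ (by positivity)
    nlinarith [le_abs_self N]
  -- `c = -t z̄` turns the form into `t ‖z‖² (t N - 2)`, which is negative unless `z = 0`.
  have hc := h (-(t : ℂ) * conj z)
  have hre : (-(t : ℂ) * conj z * z).re = -(t * ‖z‖ ^ 2) := by
    rw [mul_assoc, Complex.conj_mul', ← Complex.ofReal_pow, ← Complex.ofReal_neg,
      ← Complex.ofReal_mul, Complex.ofReal_re, neg_mul]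
  have hnorm : ‖-(t : ℂ) * conj z‖ ^ 2 = t ^ 2 * ‖z‖ ^ 2 := by
    simp [mul_pow, abs_of_pos ht]
  rw [hre, hnorm] at hc
  refine norm_eq_zero.mp (by_contra fun hz => ?_)
  have hz2 : 0 < ‖z‖ ^ 2 := by positivity
  nlinarith [mul_pos (mul_pos ht hz2) (show 0 < 2 - t * N by linarith)]

namespace WHS

variable {ω : ℕ → ℝ}

lemma exists_succ_le_mul_of_tendsto_div (hpos : ∀ n, 0 < ω n)
    (hlim : Tendsto (fun n => ω (n + 1) / ω n) atTop (nhds 1)) :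
    ∃ C, 0 ≤ C ∧ ∀ n, ω (n + 1) ≤ C * ω n := by
  obtain ⟨C, hC⟩ := hlim.bddAbove_range
  have hle n : ω (n + 1) ≤ C * ω n := (div_le_iff₀ (hpos n)).mp (hC ⟨n, rfl⟩)
  exact ⟨C, (pos_of_mul_pos_left ((hpos 1).trans_le (hle 0)) (hpos 0).le).le, hle⟩

lemma memH_shift {C : ℝ} (hω : ∀ n, 0 ≤ ω n) (hC0 : 0 ≤ C) (hC : ∀ n, ω (n + 1) ≤ C * ω n)
    {a : ℕ → ℂ} (ha : memH ω a) (m : ℕ) : memH ω (shift m a) := by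
  rw [memH, ← summable_nat_add_iff m]
  refine Summable.of_nonneg_of_le (fun n => mul_nonneg (hω _) (sq_nonneg _)) (fun n => ?_)
    (ha.mul_left (C ^ m))
  have hgeom : ω (n + m) ≤ C ^ m * ω n :=
    le_geom (u := fun k => ω (n + k)) hC0 m fun k _ => hC (n + k)
  have hshift : shift m a (n + m) = a n := by simp [shift]
  rw [hshift, ← mul_assoc]
  exact mul_le_mul_of_nonneg_right hgeom (sq_nonneg ‖a n‖)

def hardySpace (ω : ℕ → ℝ) (hω : ∀ n, 0 ≤ ω n) : Submodule ℂ (ℕ → ℂ) where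
  carrier := {a | memH ω a}
  zero_mem' := by simp [memH]
  add_mem' {a b} ha hb := by
    refine Summable.of_nonneg_of_le (fun n => mul_nonneg (hω n) (sq_nonneg _)) (fun n => ?_)
      ((ha.add hb).mul_left 2)
    have h : ‖a n + b n‖ ^ 2 ≤ 2 * (‖a n‖ ^ 2 + ‖b n‖ ^ 2) :=
      (pow_le_pow_left₀ (norm_nonneg _) (norm_add_le _ _) 2).trans add_sq_le
    calc ω n * ‖(a + b) n‖ ^ 2 ≤ ω n * (2 * (‖a n‖ ^ 2 + ‖b n‖ ^ 2)) :=
          mul_le_mul_of_nonneg_left h (hω n)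
      _ = 2 * (ω n * ‖a n‖ ^ 2 + ω n * ‖b n‖ ^ 2) := by ring
  smul_mem' c a ha := (ha.mul_left (‖c‖ ^ 2)).congr fun n => by
    simp only [Pi.smul_apply, smul_eq_mul, norm_mul]
    ring

lemma shift_zero (a : ℕ → ℂ) : shift 0 a = a := by
  ext n
  simp [shift]

lemma polyMul_eq_sum_shift (p : ℂ[X]) (a : ℕ → ℂ) :
    polyMul p a = ∑ j ∈ range (p.natDegree + 1), p.coeff j • shift j a := by
  ext n
  simp only [polyMul, Finset.sum_apply, Pi.smul_apply, smul_eq_mul]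
  set N := max n p.natDegree
  calc ∑ j ∈ range (n + 1), p.coeff j * a (n - j)
      = ∑ j ∈ range (N + 1), p.coeff j * shift j a n := by
        refine sum_subset_zero_on_sdiff (range_subset_range.mpr (by omega)) (fun j hj => ?_)
          (fun j hj => ?_)
        · simp only [Finset.mem_sdiff, mem_range] at hj
          simp [shift, show ¬j ≤ n by omega]
        · simp [shift, show j ≤ n by simpa [Nat.lt_succ_iff] using hj]
    _ = ∑ j ∈ range (p.natDegree + 1), p.coeff j * shift j a n := by
        refine (sum_subset_zero_on_sdiff (range_subset_range.mpr (by omega)) (fun j hj => ?_)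
          (fun _ _ => rfl)).symm
        simp only [Finset.mem_sdiff, mem_range] at hj
        simp [coeff_eq_zero_of_natDegree_lt (show p.natDegree < j by omega)]

lemma polyMul_add (p q : ℂ[X]) (a : ℕ → ℂ) : polyMul (p + q) a = polyMul p a + polyMul q a := by
  ext n
  simp [polyMul, add_mul, sum_add_distrib]

lemma polyMul_monomial (m : ℕ) (c : ℂ) (a : ℕ → ℂ) : polyMul (monomial m c) a = c • shift m a := by
  ext n
  simp [polyMul, coeff_monomial, shift]

lemma memH_polyMul (hω : ∀ n, 0 ≤ ω n) {a : ℕ → ℂ} (ha : ∀ m, memH ω (shift m a))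
    (p : ℂ[X]) : memH ω (polyMul p a) := by
  rw [polyMul_eq_sum_shift]
  exact (hardySpace ω hω).sum_mem fun j _ => (hardySpace ω hω).smul_mem _ (ha j)

lemma norm_wInner_term (hω : ∀ n, 0 ≤ ω n) (a b : ℕ → ℂ) (n : ℕ) :
    ‖(ω n : ℂ) * a n * conj (b n)‖ = ω n * (‖a n‖ * ‖b n‖) := by
  simp [abs_of_nonneg (hω n), mul_assoc]

lemma summable_and_tsum_mul_norm_mul_norm_le (hω : ∀ n, 0 ≤ ω n) {a b : ℕ → ℂ}
    (ha : memH ω a) (hb : memH ω b) :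
    Summable (fun n => ω n * (‖a n‖ * ‖b n‖)) ∧
      ∑' n, ω n * (‖a n‖ * ‖b n‖) ≤ √(wNorm2 ω a) * √(wNorm2 ω b) := by
  have hsq (x : ℕ → ℂ) n : (√(ω n) * ‖x n‖) ^ (2 : ℝ) = ω n * ‖x n‖ ^ 2 := by
    rw [Real.rpow_two, mul_pow, Real.sq_sqrt (hω n)]
  have hmul n : √(ω n) * ‖a n‖ * (√(ω n) * ‖b n‖) = ω n * (‖a n‖ * ‖b n‖) := by
    rw [mul_mul_mul_comm, Real.mul_self_sqrt (hω n)]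
  have H := Real.summable_and_inner_le_Lp_mul_Lq_tsum_of_nonneg Real.HolderConjugate.two_two
    (f := fun n => √(ω n) * ‖a n‖) (g := fun n => √(ω n) * ‖b n‖)
    (fun n => by positivity) (fun n => by positivity)
    (ha.congr fun n => (hsq a n).symm) (hb.congr fun n => (hsq b n).symm)
  beta_reduce at H
  simp only [hmul, hsq] at H
  rwa [Real.sqrt_eq_rpow, Real.sqrt_eq_rpow]

lemma summable_wInner (hω : ∀ n, 0 ≤ ω n) {a b : ℕ → ℂ} (ha : memH ω a) (hb : memH ω b) :
    Summable fun n => (ω n : ℂ) * a n * conj (b n) :=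
  .of_norm <| (summable_and_tsum_mul_norm_mul_norm_le hω ha hb).1.congr fun n =>
    (norm_wInner_term hω a b n).symm

lemma norm_wInner_le (hω : ∀ n, 0 ≤ ω n) {a b : ℕ → ℂ} (ha : memH ω a) (hb : memH ω b) :
    ‖wInner ω a b‖ ≤ √(wNorm2 ω a) * √(wNorm2 ω b) :=
  calc ‖wInner ω a b‖ ≤ ∑' n, ‖(ω n : ℂ) * a n * conj (b n)‖ :=
        norm_tsum_le_tsum_norm (summable_wInner hω ha hb).norm
    _ = ∑' n, ω n * (‖a n‖ * ‖b n‖) := tsum_congr (norm_wInner_term hω a b)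
    _ ≤ √(wNorm2 ω a) * √(wNorm2 ω b) := (summable_and_tsum_mul_norm_mul_norm_le hω ha hb).2

lemma wInner_self (a : ℕ → ℂ) : wInner ω a a = wNorm2 ω a := by
  rw [wInner, wNorm2, Complex.ofReal_tsum]
  refine tsum_congr fun n => ?_
  rw [mul_assoc, Complex.mul_conj', Complex.ofReal_mul, Complex.ofReal_pow]

lemma wInner_sum_smul {ι : Type*} (s : Finset ι) (c : ι → ℂ) (g : ι → ℕ → ℂ) (b : ℕ → ℂ)
    (hg : ∀ i ∈ s, Summable fun n => (ω n : ℂ) * g i n * conj (b n)) :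
    wInner ω (∑ i ∈ s, c i • g i) b = ∑ i ∈ s, c i * wInner ω (g i) b :=
  calc wInner ω (∑ i ∈ s, c i • g i) b
      = ∑' n, ∑ i ∈ s, c i * ((ω n : ℂ) * g i n * conj (b n)) := tsum_congr fun n => by
        simp only [Finset.sum_apply, Pi.smul_apply, smul_eq_mul, mul_sum, sum_mul]
        exact sum_congr rfl fun i _ => by ring
    _ = ∑ i ∈ s, ∑' n, c i * ((ω n : ℂ) * g i n * conj (b n)) :=
        Summable.tsum_finsetSum fun i hi => (hg i hi).mul_left (c i)
    _ = ∑ i ∈ s, c i * wInner ω (g i) b := by simp only [tsum_mul_left, wInner]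

lemma wInner_polyMul_of_orthogonal (hω : ∀ n, 0 ≤ ω n) {f : ℕ → ℂ}
    (hfm : ∀ m, memH ω (shift m f)) (horth : ∀ m, 1 ≤ m → wInner ω (shift m f) f = 0)
    (p : ℂ[X]) : wInner ω (polyMul p f) f = p.coeff 0 * wNorm2 ω f := by
  have hf : memH ω f := by simpa [shift_zero] using hfm 0
  rw [polyMul_eq_sum_shift, wInner_sum_smul _ _ _ _ fun j _ => summable_wInner hω (hfm j) hf,
    sum_eq_single_of_mem 0 (by simp) fun j _ hj => by
      rw [horth j (Nat.one_le_iff_ne_zero.mpr hj), mul_zero],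
    shift_zero, wInner_self]

lemma IsInner.norm_eval_zero_le (hω : ∀ n, 0 ≤ ω n) {f : ℕ → ℂ}
    (hfm : ∀ m, memH ω (shift m f)) (hinn : IsInner ω f) (p : ℂ[X]) :
    ‖p.eval 0‖ ≤ √(wNorm2 ω (polyMul p f)) := by
  obtain ⟨hf, hnorm, horth⟩ := hinn
  have h := norm_wInner_le hω (memH_polyMul hω hfm p) hf
  rw [wInner_polyMul_of_orthogonal hω hfm horth, hnorm] at h
  simpa [coeff_zero_eq_eval_zero] using h

lemma sq_norm_add_mul (x y c : ℂ) :
    ‖x + c * y‖ ^ 2 = ‖x‖ ^ 2 + ‖c‖ ^ 2 * ‖y‖ ^ 2 + 2 * (c * (y * conj x)).re := by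
  simp only [Complex.sq_norm]
  rw [Complex.normSq_add,
    Complex.normSq_mul, ← Complex.conj_re]
  simp only [map_mul, Complex.conj_conj]
  ring_nf

lemma wNorm2_add_smul (hω : ∀ n, 0 ≤ ω n) {f g : ℕ → ℂ} (hf : memH ω f) (hg : memH ω g)
    (c : ℂ) :
    wNorm2 ω (f + c • g) = wNorm2 ω f + ‖c‖ ^ 2 * wNorm2 ω g + 2 * (c * wInner ω g f).re := by
  have hI := (summable_wInner hω hg hf).mul_left c
  have hterm n : ω n * ‖(f + c • g) n‖ ^ 2 = ω n * ‖f n‖ ^ 2 + ‖c‖ ^ 2 * (ω n * ‖g n‖ ^ 2)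
      + 2 * (c * ((ω n : ℂ) * g n * conj (f n))).re := by
    rw [Pi.add_apply, Pi.smul_apply, smul_eq_mul, sq_norm_add_mul,
      show c * ((ω n : ℂ) * g n * conj (f n)) = ω n * (c * (g n * conj (f n))) by ring,
      Complex.re_ofReal_mul]
    ring
  rw [wNorm2, tsum_congr hterm, (hf.add (hg.mul_left _)).tsum_add
    ((Complex.hasSum_re hI.hasSum).summable.mul_left 2), hf.tsum_add (hg.mul_left _),
    tsum_mul_left, tsum_mul_left, ← Complex.re_tsum hI, tsum_mul_left]
  rfl

lemma wInner_shift_eq_zero_of_forall_norm_eval_zero_le (hω : ∀ n, 0 ≤ ω n) {f : ℕ → ℂ}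
    (hf : memH ω f) {m : ℕ} (hfm : memH ω (shift m f)) (hm : 1 ≤ m) (hnorm : wNorm2 ω f = 1)
    (hp : ∀ p : ℂ[X], ‖p.eval 0‖ ≤ √(wNorm2 ω (polyMul p f))) :
    wInner ω (shift m f) f = 0 := by
  refine eq_zero_of_forall_nonneg_norm_sq_mul_add_re (N := wNorm2 ω (shift m f)) fun c => ?_
  have h := hp (1 + monomial m c)
  rw [eval_add, eval_one, eval_monomial, zero_pow (show m ≠ 0 by omega), mul_zero, add_zero,
    norm_one, Real.one_le_sqrt, polyMul_add, ← monomial_zero_one, polyMul_monomial,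
    polyMul_monomial, one_smul, shift_zero, wNorm2_add_smul hω hf hfm, hnorm] at h
  linarith

end WHS

theorem stmt7_general (ω : ℕ → ℝ) (hpos : ∀ n, 0 < ω n)
    (hlim : Filter.Tendsto (fun n => ω (n + 1) / ω n) Filter.atTop (nhds 1))
    (f : ℕ → ℂ) (hf : WHS.memH ω f) :
    WHS.IsInner ω f ↔
      (WHS.wNorm2 ω f = 1 ∧ ∀ p : Polynomial ℂ,
        ‖p.eval 0‖ ≤ Real.sqrt (WHS.wNorm2 ω (WHS.polyMul p f))) := by
  have hω n : 0 ≤ ω n := (hpos n).le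
  obtain ⟨C, hC0, hC⟩ := WHS.exists_succ_le_mul_of_tendsto_div hpos hlim
  have hfm m : WHS.memH ω (WHS.shift m f) := WHS.memH_shift hω hC0 hC hf m
  refine ⟨fun hinn => ⟨hinn.2.1, hinn.norm_eval_zero_le hω hfm⟩, fun ⟨hnorm, hp⟩ => ?_⟩
  exact ⟨hf, hnorm, fun m hm =>
    WHS.wInner_shift_eq_zero_of_forall_norm_eval_zero_le hω hf (hfm m) hm hnorm hp⟩

/-- `f ∈ H²_ω` is inner iff `‖f‖ = 1` and `|p(0)| ≤ ‖p·f‖` for every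
polynomial `p`. -/
theorem stmt7 (ω : ℕ → ℝ) (hpos : ∀ n, 0 < ω n) (hω0 : ω 0 = 1)
    (hlim : Filter.Tendsto (fun n => ω (n + 1) / ω n) Filter.atTop (nhds 1))
    (f : ℕ → ℂ) (hf : WHS.memH ω f) :
    WHS.IsInner ω f ↔
      (WHS.wNorm2 ω f = 1 ∧ ∀ p : Polynomial ℂ,
        ‖p.eval 0‖ ≤ Real.sqrt (WHS.wNorm2 ω (WHS.polyMul p f))) :=
  stmt7_general ω hpos hlim f hf
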